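/- arXiv:1301.1517 — 7 statements merged into one kernel-verified Lean document; each statement's English description precedes it below -/
import Mathlib

section
/- Let P(x_1,…,x_n) be a polynomial over a field of characteristic two and T ⊆ {1,…,n}. For I ⊆ {1,…,n}, let P_{-I} denote P with the variables indexed by I set to 0. Define Q = ∑_{I ⊆ T} P_{-I}. Then for any monomial m divisible by ∏_{i∈T} x_i, the coefficient of m in Q equals its coefficient in P, and for every monomial m not divisible by ∏_{i∈T} x_i, the coefficient of m in Q is 0. -/
/-!
Substituting `0` for the variables in `I` keeps exactly the terms of `P` whose monomials avoid
those variables. So the coefficient of `m` in `Q` is `P.coeff m` times the number of `I ⊆ T`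
avoiding the variables of `m`, namely `2 ^ #{i ∈ T | m i = 0}`; in characteristic two this is
`1` if `m` involves every variable of `T` and `0` otherwise.
-/

open MvPolynomial Finset

theorem Finset.filter_powerset_forall_mem {α : Type*} (T : Finset α) (p : α → Prop)
    [DecidablePred p] : {I ∈ T.powerset | ∀ i ∈ I, p i} = (T.filter p).powerset := by
  ext I
  simp only [mem_filter, mem_powerset, subset_iff]
  grind

namespace MvPolynomial

variable {R σ : Type*} [CommSemiring R] [DecidableEq σ]

/-- `zeroVars I P` is `P_{-I}`. -/
noncomputable def zeroVars (I : Finset σ) : MvPolynomial σ R →ₐ[R] MvPolynomial σ R :=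
  bind₁ fun i => if i ∈ I then 0 else X i

theorem zeroVars_monomial (I : Finset σ) (d : σ →₀ ℕ) (c : R) :
    zeroVars I (monomial d c) = if ∀ i ∈ I, d i = 0 then monomial d c else 0 := by
  rw [zeroVars, bind₁_monomial]
  split_ifs with hd
  · rw [monomial_eq, Finsupp.prod]
    congr 1
    refine prod_congr rfl fun i hi => ?_
    rw [if_neg fun hiI => Finsupp.mem_support_iff.mp hi (hd i hiI)]
  · push Not at hd
    obtain ⟨i, hiI, hdi⟩ := hd
    rw [prod_eq_zero (Finsupp.mem_support_iff.mpr hdi) (by simp [hiI, hdi]), mul_zero]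

theorem coeff_zeroVars (I : Finset σ) (P : MvPolynomial σ R) (m : σ →₀ ℕ) :
    (zeroVars I P).coeff m = if ∀ i ∈ I, m i = 0 then P.coeff m else 0 := by
  induction P using MvPolynomial.induction_on' with
  | monomial d c =>
    rw [zeroVars_monomial]
    split_ifs with hd hm hm
    · rfl
    · rw [coeff_monomial, if_neg (by rintro rfl; exact hm hd)]
    · rw [coeff_zero, coeff_monomial, if_neg (by rintro rfl; exact hd hm)]
    · rfl
  | add p q hp hq => simp only [map_add, coeff_add, hp, hq, ite_add_ite, add_zero]

theorem coeff_sum_zeroVars_powerset (T : Finset σ) (P : MvPolynomial σ R) (m : σ →₀ ℕ) :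
    (∑ I ∈ T.powerset, zeroVars I P).coeff m = 2 ^ #{i ∈ T | m i = 0} * P.coeff m := by
  simp only [coeff_sum, coeff_zeroVars]
  rw [sum_ite, sum_const_zero, add_zero, sum_const, filter_powerset_forall_mem, card_powerset,
    nsmul_eq_mul, Nat.cast_pow, Nat.cast_ofNat]

end MvPolynomial

/-- Inclusion–exclusion extraction of monomials divisible by `∏_{i ∈ T} x_i`, over a field
of characteristic two.  `P_{-I}` is realized by substituting `0` for the variables in `I`
(via `MvPolynomial.bind₁`). -/
theorem coeff_sum_subsets_char_two {F : Type*} [Field F] [CharP F 2] {n : ℕ}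
    (P : MvPolynomial (Fin n) F) (T : Finset (Fin n)) (m : Fin n →₀ ℕ) :
    ((∀ i ∈ T, 0 < m i) →
      (∑ I ∈ T.powerset,
          MvPolynomial.bind₁
            (fun i => if i ∈ I then 0 else MvPolynomial.X i) P).coeff m = P.coeff m) ∧
    ((¬ ∀ i ∈ T, 0 < m i) →
      (∑ I ∈ T.powerset,
          MvPolynomial.bind₁
            (fun i => if i ∈ I then 0 else MvPolynomial.X i) P).coeff m = 0) := by
  have hcoeff := coeff_sum_zeroVars_powerset T P m
  simp only [zeroVars] at hcoeff
  have hzero : #{i ∈ T | m i = 0} = 0 ↔ ∀ i ∈ T, 0 < m i := by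
    simp [card_eq_zero, filter_eq_empty_iff, Nat.pos_iff_ne_zero]
  refine ⟨fun h => by rw [hcoeff, hzero.mpr h, pow_zero, one_mul], fun h => ?_⟩
  rw [hcoeff, CharTwo.two_eq_zero, zero_pow (mt hzero.mp h), zero_mul]
end

section
/- Let P be a nonzero multivariate polynomial of total degree at most d over a finite field F, and pick r_1,…,r_n independently uniformly at random from F. Then the probability that P(r_1,…,r_n) = 0 is at most d/|F|. -/
open Finset MvPolynomial

/-- Schwartz–Zippel: a nonzero polynomial of total degree at most `d` over a finite
field `F` vanishes at a uniformly random point of `F^n` with probability at most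
`d / |F|`. -/
theorem schwartz_zippel {F : Type*} [Field F] [Fintype F] [DecidableEq F] {n : ℕ}
    (P : MvPolynomial (Fin n) F) (hP : P ≠ 0) (d : ℕ) (hd : P.totalDegree ≤ d) :
    ((Finset.univ.filter fun r : Fin n → F => MvPolynomial.eval r P = 0).card : ℝ)
        / (Fintype.card F : ℝ) ^ n
      ≤ (d : ℝ) / (Fintype.card F : ℝ) := by
  have h := schwartz_zippel_totalDegree hP (univ : Finset F)
  rw [Fintype.piFinset_univ, card_univ] at h
  have h' := NNRat.cast_le (K := ℝ) |>.mpr h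
  push_cast at h'
  exact h'.trans (by gcongr)
end

section
/- Let A_G be the Tutte matrix of a simple undirected graph G on n vertices, considered over a field of characteristic two (entries x_{ij} = x_{ji} for edges ij, 0 otherwise, with distinct indeterminates per edge). Then det A_G, as a polynomial, is nonzero if and only if G has a perfect matching. -/
/-!
Over characteristic two the determinant is the permanent, `∑ σ, ∏ i, A (σ i) i`. For a
symmetric matrix the terms of `σ` and `σ⁻¹` coincide, so they cancel in pairs and only
involutions survive. An involution contributing a nonzero term pairs every vertex with a
neighbour, i.e. it is a perfect matching. Conversely, specializing the variables to the
indicator of a perfect matching turns the Tutte matrix into a permutation matrix, whose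
determinant is `±1`.
-/

open Finset MvPolynomial Equiv

theorem Matrix.IsSymm.prod_inv_perm {n R : Type*} [Fintype n] [CommMonoid R]
    {A : Matrix n n R} (hA : A.IsSymm) (σ : Perm n) :
    ∏ i, A (σ⁻¹ i) i = ∏ i, A (σ i) i :=
  calc ∏ i, A (σ⁻¹ i) i = ∏ i, A (σ⁻¹ (σ i)) (σ i) := (Equiv.prod_comp σ _).symm
    _ = ∏ i, A (σ i) i :=
      prod_congr rfl fun i _ => by rw [Perm.inv_def, symm_apply_apply, hA.apply]

namespace CharTwo

variable {n R : Type*} [Fintype n] [DecidableEq n] [CommRing R] [CharP R 2]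

theorem det_eq_permanent (A : Matrix n n R) : A.det = A.permanent := by
  rw [Matrix.det_apply]
  refine sum_congr rfl fun σ _ => ?_
  rcases Int.units_eq_one_or (Perm.sign σ) with h | h <;> simp [h, Units.smul_def, neg_eq]

theorem permanent_eq_sum_involutions {A : Matrix n n R} (hA : A.IsSymm) :
    A.permanent = ∑ σ : Perm n with σ⁻¹ = σ, ∏ i, A (σ i) i := by
  have hcancel : ∑ σ : Perm n with σ⁻¹ ≠ σ, ∏ i, A (σ i) i = 0 :=
    sum_involution (fun σ _ => σ⁻¹)
      (fun σ _ => by rw [hA.prod_inv_perm, add_self_eq_zero])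
      (fun σ hσ _ => (mem_filter.1 hσ).2)
      (fun σ hσ => by simpa [eq_comm] using hσ) (fun σ _ => inv_inv σ)
  rw [Matrix.permanent, ← sum_filter_add_sum_filter_not univ (fun σ : Perm n => σ⁻¹ = σ),
    hcancel, add_zero]

end CharTwo

namespace SimpleGraph

variable {V : Type*} (G : SimpleGraph V)

theorem exists_isPerfectMatching_of_involutive {σ : V → V} (hσ : Function.Involutive σ)
    (hadj : ∀ v, G.Adj v (σ v)) : ∃ M : G.Subgraph, M.IsPerfectMatching := by
  let M : G.Subgraph :=
    { verts := Set.univ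
      Adj := fun v w => σ v = w
      adj_sub := by rintro v _ rfl; exact hadj v
      edge_vert := fun _ => trivial
      symm := ⟨by rintro v _ rfl; exact hσ v⟩ }
  exact ⟨M, Subgraph.isPerfectMatching_iff.2 fun v => ⟨σ v, rfl, fun _ => Eq.symm⟩⟩

theorem Subgraph.IsPerfectMatching.exists_perm {M : G.Subgraph} (hM : M.IsPerfectMatching) :
    ∃ σ : Perm V, ∀ v w, M.Adj v w ↔ σ v = w := by
  choose σ hσ huniq using Subgraph.isPerfectMatching_iff.1 hM
  have hinv : Function.Involutive σ := fun v => (huniq _ _ (hσ v).symm).symm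
  exact ⟨hinv.toPerm σ, fun v w => ⟨fun h => (huniq v w h).symm, fun h => h ▸ hσ v⟩⟩

section CommSemiring

variable (F : Type*) [CommSemiring F] [DecidableRel G.Adj]

noncomputable def symmTutteMatrix : Matrix V V (MvPolynomial (Sym2 V) F) :=
  Matrix.of fun i j => if G.Adj i j then X s(i, j) else 0

@[simp]
theorem symmTutteMatrix_apply (i j : V) :
    G.symmTutteMatrix F i j = if G.Adj i j then X s(i, j) else 0 := rfl

theorem isSymm_symmTutteMatrix : (G.symmTutteMatrix F).IsSymm :=
  Matrix.IsSymm.ext fun i j => by simp [G.adj_comm, Sym2.eq_swap]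

variable {G F}

theorem adj_of_prod_symmTutteMatrix_ne_zero [Fintype V] {σ : Perm V}
    (h : ∏ i, G.symmTutteMatrix F (σ i) i ≠ 0) (i : V) : G.Adj (σ i) i := by
  by_contra hi
  exact h (prod_eq_zero (mem_univ i) (by simp [hi]))

theorem map_eval_symmTutteMatrix_eq_permMatrix [DecidableEq V] {M : G.Subgraph} {σ : Perm V}
    (hσ : ∀ v w, M.Adj v w ↔ σ v = w) :
    (G.symmTutteMatrix F).map (eval (M.edgeSet.indicator 1)) = σ.permMatrix F := by
  ext i j
  by_cases hM : M.Adj i j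
  · simp [M.adj_sub hM, (hσ i j).1 hM, hM]
  · by_cases hG : G.Adj i j
    · simp [hG, hM, (hσ i j).not.1 hM]
    · simp [hG, (hσ i j).not.1 hM]

end CommSemiring

variable {G}

theorem det_symmTutteMatrix_ne_zero [Fintype V] [DecidableEq V] [DecidableRel G.Adj]
    {F : Type*} [CommRing F] [Nontrivial F] {M : G.Subgraph} (hM : M.IsPerfectMatching) :
    (G.symmTutteMatrix F).det ≠ 0 := by
  obtain ⟨σ, hσ⟩ := hM.exists_perm
  intro hdet
  have hsign := congrArg (eval (M.edgeSet.indicator (1 : Sym2 V → F))) hdet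
  rw [RingHom.map_det, RingHom.mapMatrix_apply, map_eval_symmTutteMatrix_eq_permMatrix hσ,
    Matrix.det_permutation, map_zero] at hsign
  exact ((Perm.sign σ).isUnit.map (Int.castRingHom F)).ne_zero hsign

end SimpleGraph

/-- Tutte's theorem over characteristic two: the determinant of the (symmetric) Tutte
matrix of a simple graph `G`, with a distinct indeterminate `x_{ij}` for every edge
`ij`, is a nonzero polynomial if and only if `G` has a perfect matching. -/
theorem tutte_matrix_det_ne_zero_iff_perfectMatching {F : Type*} [Field F] [CharP F 2]
    {n : ℕ} (G : SimpleGraph (Fin n)) [DecidableRel G.Adj]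
    (A : Matrix (Fin n) (Fin n) (MvPolynomial (Sym2 (Fin n)) F))
    (hA : ∀ i j, A i j = if G.Adj i j then MvPolynomial.X s(i, j) else 0) :
    A.det ≠ 0 ↔ ∃ M : G.Subgraph, M.IsPerfectMatching := by
  obtain rfl : A = G.symmTutteMatrix F := Matrix.ext hA
  refine ⟨fun hdet => ?_, fun ⟨M, hM⟩ => SimpleGraph.det_symmTutteMatrix_ne_zero hM⟩
  rw [CharTwo.det_eq_permanent,
    CharTwo.permanent_eq_sum_involutions (G.isSymm_symmTutteMatrix F)] at hdet
  obtain ⟨σ, hσ, hprod⟩ := exists_ne_zero_of_sum_ne_zero hdet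
  have hinv : Function.Involutive σ := fun v => by
    simpa using congrArg (· v) (inv_eq_iff_mul_eq_one.1 (mem_filter.1 hσ).2)
  exact G.exists_isPerfectMatching_of_involutive hinv fun v =>
    (SimpleGraph.adj_of_prod_symmTutteMatrix_ne_zero hprod v).symm
end

section
/- Let G = (V,E) be a graph with terminal set K ⊆ V, |K| > 1, and K an independent set. Construct G' by replacing each v ∈ K by two nonadjacent copies v', v'' each with neighborhood N_G(v), and a new vertex ṽ adjacent exactly to v' and v''; let K' be the set of new vertices ṽ. Then G has a cycle passing through all of K if and only if G' has a cycle passing through all of K'. Moreover, every vertex of K' has degree exactly 2 in G' and the vertices of K' are pairwise non-adjacent with pairwise disjoint neighborhoods. -/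
/-- `G` has a cycle passing through all vertices of `S`. -/
def HasCycleThrough {V : Type*} (G : SimpleGraph V) (S : Set V) : Prop :=
  ∃ (a : V) (w : G.Walk a a), w.IsCycle ∧ ∀ v ∈ S, v ∈ w.support

/-- The symmetrized adjacency relation of the terminal gadget: every terminal `v ∈ K`
is replaced by two nonadjacent copies `v' = Sum.inl v` and `v'' = Sum.inr (Sum.inl ⟨v,_⟩)`,
each with the neighbourhood `N_G(v)`, together with a new terminal vertex
`ṽ = Sum.inr (Sum.inr ⟨v,_⟩)` adjacent exactly to `v'` and `v''`. -/
def gadgetRel {V : Type*} (G : SimpleGraph V) (K : Finset V) :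
    (V ⊕ ({v // v ∈ K} ⊕ {v // v ∈ K})) → (V ⊕ ({v // v ∈ K} ⊕ {v // v ∈ K})) → Prop
  | Sum.inl u, Sum.inl w => G.Adj u w
  | Sum.inl u, Sum.inr (Sum.inl v) => G.Adj u v.1
  | Sum.inr (Sum.inl v), Sum.inl u => G.Adj u v.1
  | Sum.inl u, Sum.inr (Sum.inr v) => u = v.1
  | Sum.inr (Sum.inr v), Sum.inl u => u = v.1
  | Sum.inr (Sum.inl v), Sum.inr (Sum.inr w) => v = w
  | Sum.inr (Sum.inr v), Sum.inr (Sum.inl w) => v = w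
  | _, _ => False

/-- The gadget graph `G'` of the preprocessing step. -/
def gadget {V : Type*} (G : SimpleGraph V) (K : Finset V) :
    SimpleGraph (V ⊕ ({v // v ∈ K} ⊕ {v // v ∈ K})) :=
  SimpleGraph.fromRel (gadgetRel G K)

/-!
Forward: a cycle of `G` through `K` becomes a cycle of `G'` by entering each terminal `v` at
`v''`, passing through `ṽ` and leaving from `v'`. Backward: since `N(ṽ) = {v', v''}` and
`N(v'') \ {ṽ} ⊆ N(v')`, the segment `v' – ṽ – v'' – y` of a cycle can be shortcut to the edge
`v' – y`; repeating this removes every `ṽ` and `v''` and leaves a cycle of the copy of `G`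
through all `v'`. Independence of `K` and a second terminal keep each shortened cycle of length
at least three.
-/

namespace SimpleGraph.Walk

variable {V W : Type*} {G : SimpleGraph V} {H : SimpleGraph W}

theorem isCycle_of_nodup_support_tail {u : W} {c : H.Walk u u} (hc : c.support.tail.Nodup)
    (hl : 3 ≤ c.length) : c.IsCycle := by
  have hnil : ¬ c.Nil := by rw [← length_eq_zero_iff]; omega
  rw [isCycle_iff_isPath_tail_and_le_length, isPath_def, support_tail_of_not_nil _ hnil]
  exact ⟨hc, hl⟩

theorem two_le_length_of_mem_support {u v x : W} {p : H.Walk u v} (hx : x ∈ p.support)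
    (hxu : x ≠ u) (hxv : x ≠ v) : 2 ≤ p.length := by
  rcases p with _ | ⟨_, _ | ⟨_, _⟩⟩ <;> simp_all

theorem IsPath.isCycle_concat {u v : W} {p : H.Walk u v} (hp : p.IsPath) (h : H.Adj v u)
    (hl : 2 ≤ p.length) : (p.concat h).IsCycle := by
  have hu : u ∉ p.support.tail := by
    have := hp.support_nodup
    rw [← cons_tail_support p, List.nodup_cons] at this
    exact this.1
  rw [concat_eq_append]
  exact hp.isCycle_append (IsPath.of_adj h) (by simpa using hu) (Or.inl (by omega))

theorem IsCycle.exists_isPath_between_neighbors {t : W} {c : H.Walk t t} (hc : c.IsCycle) :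
    ∃ (n m : W) (p : H.Walk n m), H.Adj t n ∧ H.Adj t m ∧ n ≠ m ∧ p.IsPath ∧ t ∉ p.support ∧
      p.length + 2 = c.length ∧ ∀ x, x ∈ c.support ↔ x = t ∨ x ∈ p.support := by
  obtain _ | ⟨hn, q⟩ := c
  · exact absurd hc not_isCycle_nil
  obtain _ | ⟨hq, q'⟩ := q
  · simpa using hc.three_le_length
  obtain ⟨m, p, hm, hpq⟩ := exists_cons_eq_concat hq q'
  have hc' := hc
  rw [cons_isCycle_iff, hpq, concat_isPath_iff] at hc'
  obtain ⟨⟨hp, htp⟩, -⟩ := hc'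
  have hlen : p.length + 2 = (cons hn (cons hq q')).length := by
    rw [length_cons, length_cons, ← length_cons hq q', hpq, length_concat]
  refine ⟨_, m, p, hn, hm.symm, ?_, hp, htp, hlen, fun x => ?_⟩
  · rintro rfl
    have := hc.three_le_length
    rw [← hlen, length_eq_zero_iff.mpr (isPath_iff_nil.mp hp)] at this
    omega
  · rw [support_cons, hpq, support_concat]
    simp [or_comm]

/-- The cycle runs `… – a – t – b – y – …`; the new cycle replaces `a – t – b – y` by the edge
`y – a`, and the vertex `z` keeps its length at least three. -/
theorem IsCycle.exists_isCycle_bypass [DecidableEq W] {u t a b z : W} {c : H.Walk u u}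
    (hc : c.IsCycle) (ht : t ∈ c.support) (ht_adj : ∀ x, H.Adj t x → x = a ∨ x = b)
    (hb_adj : ∀ y, H.Adj y b → y ≠ t → H.Adj y a) (hz : z ∈ c.support) (hzt : z ≠ t)
    (hza : z ≠ a) (hzb : z ≠ b) (hz_adj : ¬ H.Adj z b) :
    ∃ c' : H.Walk a a, c'.IsCycle ∧ c'.length < c.length ∧
      ∀ x, x ∈ c'.support ↔ x ∈ c.support ∧ x ≠ t ∧ x ≠ b := by
  obtain ⟨p, hab, hp, htp, hlen, hsupp⟩ : ∃ p : H.Walk a b, a ≠ b ∧ p.IsPath ∧ t ∉ p.support ∧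
      p.length + 2 = c.length ∧ ∀ x, x ∈ c.support ↔ x = t ∨ x ∈ p.support := by
    obtain ⟨n, m, p, hn, hm, hnm, hp, htp, hlen, hsupp⟩ :=
      (hc.rotate ht).exists_isPath_between_neighbors
    simp only [length_rotate, mem_support_rotate_iff] at hlen hsupp
    rcases ht_adj n hn with rfl | rfl <;> rcases ht_adj m hm with rfl | rfl
    · exact absurd rfl hnm
    · exact ⟨p, hnm, hp, htp, hlen, hsupp⟩
    · exact ⟨p.reverse, hnm.symm, hp.reverse, by simpa using htp, by simpa using hlen,
        by simpa using hsupp⟩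
    · exact absurd rfl hnm
  obtain ⟨y, r, hy, rfl⟩ : ∃ (y : W) (r : H.Walk a y) (hy : H.Adj y b), p = r.concat hy :=
    ⟨_, _, _, (concat_dropLast (p.adj_penultimate (not_nil_of_ne hab))).symm⟩
  rw [concat_isPath_iff] at hp
  obtain ⟨hr, hbr⟩ := hp
  simp only [support_concat, List.mem_append, List.mem_singleton,
    length_concat] at htp hlen hsupp
  have hya : H.Adj y a := hb_adj y hy fun h => htp (Or.inl (h ▸ r.end_mem_support))
  have hzr : z ∈ r.support := by grind
  have hr2 : 2 ≤ r.length := two_le_length_of_mem_support hzr hza (by rintro rfl; exact hz_adj hy)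
  refine ⟨r.concat hya, hr.isCycle_concat hya hr2, by simp; omega, fun x => ?_⟩
  simp only [support_concat, List.mem_append, List.mem_singleton, hsupp]
  grind [start_mem_support]

theorem IsCycle.exists_isCycle_of_support_subset_range (f : G ↪g H) {x : W} {c : H.Walk x x}
    (hc : c.IsCycle) (hsub : ∀ y ∈ c.support, y ∈ Set.range f) :
    ∃ (a : V) (c' : G.Walk a a), c'.IsCycle ∧ ∀ u, f u ∈ c.support → u ∈ c'.support := by
  have hind : (c.induce _ hsub).IsCycle := by
    rw [← map_induce c hsub] at hc
    exact hc.of_map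
  refine ⟨_, (c.induce _ hsub).map f.isoInduceRange.symm.toHom,
    (isCycle_map_iff_of_injective f.isoInduceRange.symm.injective).mpr hind, fun u hu => ?_⟩
  rw [support_map, List.mem_map]
  exact ⟨⟨f u, u, rfl⟩, by simpa using hu, f.isoInduceRange.symm_apply_eq.mpr rfl⟩

end SimpleGraph.Walk

namespace gadget

open SimpleGraph

variable {V : Type*} {G : SimpleGraph V} {K : Finset V}

-- `twin v` is `v''` and `terminal v` is `ṽ`; the copy `v'` is `Sum.inl v`.
abbrev twin (v : {v // v ∈ K}) : V ⊕ ({v // v ∈ K} ⊕ {v // v ∈ K}) := Sum.inr (Sum.inl v)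

abbrev terminal (v : {v // v ∈ K}) : V ⊕ ({v // v ∈ K} ⊕ {v // v ∈ K}) := Sum.inr (Sum.inr v)

@[simp] theorem adj_inl_inl {u w : V} : (gadget G K).Adj (.inl u) (.inl w) ↔ G.Adj u w := by
  simp only [gadget, fromRel_adj, gadgetRel, ne_eq, Sum.inl.injEq, G.adj_comm w u, or_self]
  exact and_iff_right_of_imp G.ne_of_adj

@[simp] theorem adj_inl_twin {u : V} {v : {v // v ∈ K}} :
    (gadget G K).Adj (.inl u) (twin v) ↔ G.Adj u v := by
  simp [gadget, gadgetRel]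

theorem adj_terminal {v : {v // v ∈ K}} {x} :
    (gadget G K).Adj (terminal v) x ↔ x = .inl v ∨ x = twin v := by
  rcases x with u | w | w <;> simp [gadget, gadgetRel, eq_comm]

theorem adj_inl_of_adj_twin {v : {v // v ∈ K}} {y} (hy : (gadget G K).Adj y (twin v))
    (hyv : y ≠ terminal v) : (gadget G K).Adj y (.inl v) := by
  rcases y with u | w | w <;> simp_all [gadget, gadgetRel, G.ne_of_adj]

theorem neighborSet_terminal (v : {v // v ∈ K}) :
    (gadget G K).neighborSet (terminal v) = {.inl v, twin v} := by
  ext; simp [adj_terminal]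

variable [DecidableEq V] (K)

-- The vertices visited on entering `u`: for a terminal, `v'' – ṽ – v'`.
def expandVertex (u : V) : List (V ⊕ ({v // v ∈ K} ⊕ {v // v ∈ K})) :=
  if hu : u ∈ K then [twin ⟨u, hu⟩, terminal ⟨u, hu⟩, .inl u] else [.inl u]

def expand {a b : V} : G.Walk a b → (gadget G K).Walk (.inl a) (.inl b)
  | .nil => .nil
  | .cons (v := n) h p =>
    if hn : n ∈ K then
      .cons (adj_inl_twin.2 h : (gadget G K).Adj _ (twin ⟨n, hn⟩))
        (.cons (adj_terminal.2 (.inr rfl)).symm (.cons (adj_terminal.2 (.inl rfl)) (expand p)))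
    else .cons (adj_inl_inl.2 h) (expand p)

variable {K}

theorem support_expand {a b : V} (p : G.Walk a b) :
    (expand K p).support = .inl a :: p.support.tail.flatMap (expandVertex K) := by
  induction p with
  | nil => rfl
  | cons h p ih =>
    rw [Walk.support_cons, List.tail_cons, ← Walk.cons_tail_support p, List.flatMap_cons, expand]
    split_ifs with hn <;> simp [ih, expandVertex, hn]

theorem length_le_length_expand {a b : V} (p : G.Walk a b) : p.length ≤ (expand K p).length := by
  induction p with
  | nil => rfl
  | cons h p ih =>
    rw [expand]
    split_ifs <;> simp <;> omega

theorem eq_of_mem_expandVertex {x} {u w : V} (hu : x ∈ expandVertex K u)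
    (hw : x ∈ expandVertex K w) : u = w := by
  unfold expandVertex at hu hw
  split_ifs at hu hw <;> simp at hu hw <;> aesop

theorem isCycle_expand {a : V} {c : G.Walk a a} (hc : c.IsCycle) :
    (expand K c).IsCycle := by
  refine Walk.isCycle_of_nodup_support_tail ?_
    (hc.three_le_length.trans (length_le_length_expand c))
  rw [support_expand, List.tail_cons, List.nodup_flatMap]
  refine ⟨fun u _ => ?_, hc.support_nodup.imp fun hne => ?_⟩
  · unfold expandVertex; split_ifs <;> simp
  · exact fun _ hx hx' => hne (eq_of_mem_expandVertex hx hx')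

theorem terminal_mem_support_expand {a b : V} {p : G.Walk a b} {v : {v // v ∈ K}}
    (hv : v.1 ∈ p.support.tail) : terminal v ∈ (expand K p).support := by
  rw [support_expand]
  refine List.mem_cons_of_mem _ (List.mem_flatMap.mpr ⟨v, hv, ?_⟩)
  simp [expandVertex]

theorem hasCycleThrough_terminals_of_hasCycleThrough (h : HasCycleThrough G K) :
    HasCycleThrough (gadget G K) {x | ∃ v, x = terminal v} := by
  obtain ⟨a, c, hc, hK⟩ := h
  refine ⟨_, expand K c, isCycle_expand hc, ?_⟩
  rintro _ ⟨v, rfl⟩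
  apply terminal_mem_support_expand
  rcases c.mem_support_iff.mp (hK v v.2) with hva | hv
  · exact hva ▸ c.end_mem_tail_support hc.not_nil
  · exact hv

variable (G K) in
def inlEmbedding : G ↪g gadget G K := ⟨⟨Sum.inl, Sum.inl_injective⟩, adj_inl_inl⟩

theorem hasCycleThrough_of_isCycle (hcard : 1 < K.card)
    (hind : ∀ v ∈ K, ∀ w ∈ K, ¬ G.Adj v w) {s} {c : (gadget G K).Walk s s} (hc : c.IsCycle)
    (hK : ∀ v, terminal v ∈ c.support ∨ .inl v.1 ∈ c.support)
    (htwin : ∀ v, twin v ∈ c.support → terminal v ∈ c.support) :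
    HasCycleThrough G K := by
  induction hn : c.length using Nat.strong_induction_on generalizing s c with
  | _ n ih =>
    by_cases hT : ∃ w, terminal w ∈ c.support
    · obtain ⟨w, hw⟩ := hT
      obtain ⟨v₀, hv₀, hv₀w⟩ := Finset.exists_mem_ne hcard w.1
      obtain ⟨z, hz, hz_terminal, hz_inl, hz_twin, hz_adj⟩ : ∃ z ∈ c.support,
          z ≠ terminal w ∧ z ≠ .inl w.1 ∧ z ≠ twin w ∧ ¬ (gadget G K).Adj z (twin w) := by
        rcases hK ⟨v₀, hv₀⟩ with hz | hz
        · exact ⟨_, hz, by simp [adj_terminal, Subtype.ext_iff, hv₀w, hv₀w.symm]⟩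
        · exact ⟨_, hz, by simp [hv₀w, hind v₀ hv₀ w w.2]⟩
      obtain ⟨c', hc', hlen, hsupp⟩ := hc.exists_isCycle_bypass hw (fun _ => adj_terminal.mp)
        (fun _ => adj_inl_of_adj_twin) hz hz_terminal hz_inl hz_twin hz_adj
      refine ih _ (hn ▸ hlen) hc' (fun v => ?_) (fun v hv => ?_) rfl
      · by_cases hvw : v = w
        · exact .inr (hvw ▸ c'.start_mem_support)
        · simpa [hsupp, hvw] using hK v
      · have hvw : v ≠ w := by rintro rfl; exact ((hsupp _).mp hv).2.2 rfl
        simp [hsupp, hvw, htwin v ((hsupp _).mp hv).1]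
    · simp only [not_exists] at hT
      have hsub : ∀ x ∈ c.support, x ∈ Set.range (inlEmbedding G K) := by
        rintro (u | v | v) hx
        · exact ⟨u, rfl⟩
        · exact absurd (htwin v hx) (hT v)
        · exact absurd hx (hT v)
      obtain ⟨a, c', hc', hsupp⟩ := hc.exists_isCycle_of_support_subset_range _ hsub
      exact ⟨a, c', hc', fun v hv => hsupp v ((hK ⟨v, hv⟩).resolve_left (hT _))⟩

end gadget

/-- Preprocessing of `K`-cycle: if `K` is an independent set with `|K| > 1`, then `G`
has a cycle through all of `K` iff the gadget graph `G'` has a cycle through all of the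
new terminals `K' = {ṽ : v ∈ K}`; moreover every new terminal has degree exactly two in
`G'`, and the new terminals are pairwise non-adjacent with pairwise disjoint
neighbourhoods. -/
theorem kcycle_degree_two_reduction {V : Type*} [DecidableEq V] (G : SimpleGraph V)
    (K : Finset V) (hcard : 1 < K.card)
    (hind : ∀ v ∈ K, ∀ w ∈ K, ¬ G.Adj v w) :
    (HasCycleThrough G (K : Set V) ↔
      HasCycleThrough (gadget G K)
        {x | ∃ v : {v // v ∈ K}, x = Sum.inr (Sum.inr v)}) ∧
    (∀ v : {v // v ∈ K},
      ((gadget G K).neighborSet (Sum.inr (Sum.inr v))).ncard = 2) ∧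
    (∀ v w : {v // v ∈ K},
      ¬ (gadget G K).Adj (Sum.inr (Sum.inr v)) (Sum.inr (Sum.inr w))) ∧
    (∀ v w : {v // v ∈ K}, v ≠ w →
      Disjoint ((gadget G K).neighborSet (Sum.inr (Sum.inr v)))
        ((gadget G K).neighborSet (Sum.inr (Sum.inr w)))) := by
  refine ⟨⟨gadget.hasCycleThrough_terminals_of_hasCycleThrough, ?_⟩, fun v => ?_, fun v w => ?_,
    fun v w hvw => ?_⟩
  · rintro ⟨s, c, hc, hK⟩
    exact gadget.hasCycleThrough_of_isCycle hcard hind hc (fun v => .inl (hK _ ⟨v, rfl⟩))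
      (fun v _ => hK _ ⟨v, rfl⟩)
  · rw [gadget.neighborSet_terminal, Set.ncard_pair (by simp)]
  · simp [gadget.adj_terminal]
  · rw [gadget.neighborSet_terminal, gadget.neighborSet_terminal]
    simp [Set.disjoint_insert_right, hvw.symm]
end

section
/- Let σ ∈ S_n be a permutation and C a cycle of σ of length ℓ ≥ 3 (as a cyclic orbit), and let σ' be the permutation obtained from σ by replacing C with its inverse cycle C^{-1} (reversing the cycle) and agreeing with σ elsewhere. Then σ' ≠ σ, (σ')' = σ, and if A is a symmetric matrix then ∏_i A(i,σ(i)) = ∏_i A(i,σ'(i)). -/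
/-!
Write `σ' = σ * c⁻¹ * c⁻¹`. Off the support of `c` the two permutations agree, and on it
`σ'` acts as `c⁻¹`, so `σ' (c i) = i`. Reindexing the product for `σ'` along `c` turns each
factor `A (c i) (σ' (c i))` into `A (c i) i = A i (σ i)`, which is where symmetry enters.
The two permutations differ because `c² ≠ 1` for a cycle of length at least three.
-/

open Finset

namespace Equiv.Perm

theorem mul_inv_mul_inv_eq_self_iff {α : Type*} {σ c : Perm α} :
    σ * c⁻¹ * c⁻¹ = σ ↔ c ^ 2 = 1 := by
  rw [mul_assoc, mul_eq_left, ← mul_inv_rev, inv_eq_one, sq]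

variable {α : Type*} [Fintype α] [DecidableEq α]

theorem IsCycle.sq_ne_one {c : Perm α} (hc : c.IsCycle) (hlen : 3 ≤ #c.support) : c ^ 2 ≠ 1 := by
  intro h
  have hle : #c.support ≤ 2 := Nat.le_of_dvd two_pos (hc.orderOf ▸ orderOf_dvd_of_pow_eq_one h)
  omega

theorem mul_inv_mul_inv_apply_apply_of_mem_support {σ c : Perm α}
    (hagree : ∀ a ∈ c.support, c a = σ a) {i : α} (hi : i ∈ c.support) :
    (σ * c⁻¹ * c⁻¹) (c i) = i := by
  have hinv : c⁻¹ i ∈ c.support := by rwa [← support_inv, apply_mem_support, support_inv]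
  have hcancel : (σ * c⁻¹ * c⁻¹) (c i) = σ (c⁻¹ i) := by simp
  rw [hcancel, ← hagree _ hinv]
  simp

theorem prod_apply_mul_inv_mul_inv_of_symm {M : Type*} [CommMonoid M] (f : α → α → M)
    (hf : ∀ i j, f i j = f j i) {σ c : Perm α} (hagree : ∀ a ∈ c.support, c a = σ a) :
    ∏ i, f i (σ i) = ∏ i, f i ((σ * c⁻¹ * c⁻¹) i) := by
  rw [← Equiv.prod_comp c (fun i ↦ f i ((σ * c⁻¹ * c⁻¹) i))]
  refine prod_congr rfl fun i _ ↦ ?_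
  by_cases hi : i ∈ c.support
  · rw [mul_inv_mul_inv_apply_apply_of_mem_support hagree hi, ← hagree _ hi, hf]
  · have hfix : c i = i := notMem_support.mp hi
    have hfix_inv : c⁻¹ i = i := inv_eq_iff_eq.mpr hfix.symm
    simp only [mul_apply, hfix, hfix_inv]

end Equiv.Perm

open Equiv.Perm in
/-- Reversing a cycle of length at least three in a permutation: if `c` is a cycle of
`σ` (a factor of its cycle decomposition) with support of size at least `3`, then the
permutation `σ' = σ * c⁻¹ * c⁻¹` (which replaces the cycle `c` of `σ` by its inverse)
is distinct from `σ`, reversing it again recovers `σ`, and for any symmetric matrix `A`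
the diagonal products of `σ` and `σ'` coincide. -/
theorem reverse_cycle_of_perm {R : Type*} [CommRing R] {n : ℕ}
    (A : Matrix (Fin n) (Fin n) R) (hsym : A.IsSymm)
    (σ c : Equiv.Perm (Fin n)) (hc : c ∈ σ.cycleFactorsFinset)
    (hlen : 3 ≤ c.support.card) :
    σ * c⁻¹ * c⁻¹ ≠ σ ∧
    (σ * c⁻¹ * c⁻¹) * c * c = σ ∧
    ∏ i : Fin n, A i (σ i) = ∏ i : Fin n, A i ((σ * c⁻¹ * c⁻¹) i) := by
  obtain ⟨hcycle, hagree⟩ := mem_cycleFactorsFinset_iff.mp hc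
  refine ⟨?_, by group, ?_⟩
  · rw [Ne, mul_inv_mul_inv_eq_self_iff]
    exact hcycle.sq_ne_one hlen
  · exact prod_apply_mul_inv_mul_inv_of_symm A (fun i j ↦ hsym.apply j i) hagree
end

section
/- Over a field F of characteristic two, if A is a symmetric n×n matrix with zero diagonal (an adjacency-type matrix of indeterminates of a simple graph), then det A = ∑_{σ} ∏_i A(i,σ(i)) where the sum ranges only over permutations σ that are fixed-point-free involutions, i.e., det A equals the sum over perfect-matching permutations; all other nonzero terms cancel in pairs. -/
open scoped Classical

open Finset Equiv

/-
In characteristic two every sign is `1`, so `det A` is the sum of `∏ i, A i (σ i)` over all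
permutations. For symmetric `A` this product is invariant under `σ ↦ σ⁻¹`, so the terms of the
permutations with `σ⁻¹ ≠ σ` cancel in pairs. Of the involutions that remain, those with a fixed
point contribute a diagonal entry, hence zero, leaving the fixed-point-free involutions.
-/

namespace Matrix

variable {n R : Type*} [Fintype n]

theorem det_eq_permanent_of_charP_two [DecidableEq n] [CommRing R] [CharP R 2]
    (A : Matrix n n R) : A.det = A.permanent := by
  rw [det_apply, permanent]
  refine sum_congr rfl fun σ _ => ?_
  rcases Int.units_eq_one_or (Perm.sign σ) with h | h <;> simp [h, CharTwo.neg_eq]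

variable [CommMonoid R] {A : Matrix n n R}

theorem IsSymm.prod_apply_perm_comm (hA : A.IsSymm) (σ : Perm n) :
    ∏ i, A (σ i) i = ∏ i, A i (σ i) :=
  prod_congr rfl fun i _ => hA.apply i (σ i)

theorem IsSymm.prod_apply_perm_inv (hA : A.IsSymm) (σ : Perm n) :
    ∏ i, A i (σ⁻¹ i) = ∏ i, A i (σ i) :=
  calc ∏ i, A i (σ⁻¹ i) = ∏ i, A (σ i) (σ⁻¹ (σ i)) := (Equiv.prod_comp σ _).symm
    _ = ∏ i, A (σ i) i := by simp only [Perm.coe_inv, symm_apply_apply]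
    _ = ∏ i, A i (σ i) := hA.prod_apply_perm_comm σ

end Matrix

theorem Finset.sum_filter_mul_self_ne_one_eq_zero {G R : Type*} [Group G] [Fintype G]
    [DecidableEq G] [Semiring R] [CharP R 2] (f : G → R) (hf : ∀ g, f g⁻¹ = f g) :
    ∑ g ∈ univ.filter (fun g => g * g ≠ 1), f g = 0 := by
  refine sum_involution (fun g _ => g⁻¹) (fun g _ => by rw [hf, CharTwo.add_self_eq_zero])
    (fun g hg _ hinv => ?_) (fun g hg => ?_) (fun g _ => inv_inv g)
  · exact (mem_filter.1 hg).2 (by rw [mul_eq_one_iff_eq_inv, hinv])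
  · rw [mem_filter] at hg ⊢
    exact ⟨mem_univ _, by rw [← mul_inv_rev, Ne, inv_eq_one]; exact hg.2⟩

/-- Over a commutative ring of characteristic two, the determinant of a symmetric matrix
with zero diagonal equals the sum of the diagonal products over the fixed-point-free
involutions (i.e. the perfect-matching permutations); all other terms cancel in pairs. -/
theorem det_symm_zero_diag_eq_sum_matchings {R : Type*} [CommRing R] [CharP R 2] {n : ℕ}
    (A : Matrix (Fin n) (Fin n) R) (hsym : A.IsSymm) (hdiag : ∀ i, A i i = 0) :
    A.det = ∑ σ ∈ Finset.univ.filter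
        (fun σ : Equiv.Perm (Fin n) => σ * σ = 1 ∧ ∀ i, σ i ≠ i),
      ∏ i : Fin n, A i (σ i) := by
  have hfix : ∀ σ : Perm (Fin n), ∏ i, A i (σ i) ≠ 0 → ∀ i, σ i ≠ i :=
    fun σ hσ i hi => hσ (prod_eq_zero (mem_univ i) (by rw [hi, hdiag]))
  calc A.det = ∑ σ : Perm (Fin n), ∏ i, A i (σ i) := by
        rw [A.det_eq_permanent_of_charP_two, Matrix.permanent]
        exact sum_congr rfl fun σ _ => hsym.prod_apply_perm_comm σ
    _ = ∑ σ ∈ univ.filter (fun σ : Perm (Fin n) => σ * σ = 1), ∏ i, A i (σ i) := by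
        rw [← sum_filter_add_sum_filter_not univ (fun σ : Perm (Fin n) => σ * σ = 1),
          sum_filter_mul_self_ne_one_eq_zero _ hsym.prod_apply_perm_inv, add_zero]
    _ = _ := by
        rw [← filter_filter]
        exact (sum_filter_of_ne fun σ _ hσ => hfix σ hσ).symm
end

section
/- Let Q = ∑_{I ⊆ T} P_{-I} as in the inclusion-exclusion lemma over a field of characteristic two. Then Q is not identically zero if and only if P contains a monomial with nonzero coefficient divisible by ∏_{i∈T} x_i. -/
open MvPolynomial

lemma bind_mono {F : Type*} [CommRing F] {n : ℕ} (I : Finset (Fin n))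
    (m : Fin n →₀ ℕ) (c : F) :
    MvPolynomial.bind₁ (fun i => if i ∈ I then 0 else MvPolynomial.X i)
      (MvPolynomial.monomial m c) =
    if ∀ i ∈ I, m i = 0 then MvPolynomial.monomial m c else 0 := by
  rw [bind₁, aeval_monomial]
  by_cases h : ∀ i ∈ I, m i = 0
  · rw [if_pos h]
    have : (m.prod fun i k => (if i ∈ I then (0 : MvPolynomial (Fin n) F) else X i) ^ k)
        = m.prod fun i k => (X i) ^ k := by
      apply Finsupp.prod_congr
      intro i hi
      have : i ∉ I := fun hI => (Finsupp.mem_support_iff.mp hi) (h i hI)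
      rw [if_neg this]
    rw [this, monomial_eq, algebraMap_eq]
  · rw [if_neg h]
    push_neg at h
    obtain ⟨i, hiI, hmi⟩ := h
    have : (m.prod fun i k => (if i ∈ I then (0 : MvPolynomial (Fin n) F) else X i) ^ k) = 0 := by
      apply Finset.prod_eq_zero (Finsupp.mem_support_iff.mpr hmi)
      simp [if_pos hiI, zero_pow hmi]
    rw [this, mul_zero]

lemma coeff_bind {F : Type*} [CommRing F] {n : ℕ} (I : Finset (Fin n))
    (P : MvPolynomial (Fin n) F) (m : Fin n →₀ ℕ) :
    (MvPolynomial.bind₁ (fun i => if i ∈ I then 0 else MvPolynomial.X i) P).coeff m =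
    if ∀ i ∈ I, m i = 0 then P.coeff m else 0 := by
  conv_lhs => rw [P.as_sum, map_sum]
  rw [MvPolynomial.coeff_sum]
  have key : ∀ m' ∈ P.support,
      (MvPolynomial.bind₁ (fun i => if i ∈ I then 0 else MvPolynomial.X i)
        (MvPolynomial.monomial m' (P.coeff m'))).coeff m =
      if m' = m then (if ∀ i ∈ I, m i = 0 then P.coeff m else 0) else 0 := by
    intro m' _
    rw [bind_mono]
    by_cases hm : m' = m
    · subst hm
      rw [if_pos rfl]
      split_ifs with h1
      · rw [coeff_monomial, if_pos rfl]
      · simp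
    · rw [if_neg hm]
      split_ifs with h1
      · rw [coeff_monomial, if_neg hm]
      · simp
  rw [Finset.sum_congr rfl key]
  by_cases hm : m ∈ P.support
  · rw [Finset.sum_ite_eq' P.support m, if_pos hm]
  · rw [Finset.sum_ite_eq' P.support m, if_neg hm]
    rw [MvPolynomial.notMem_support_iff.mp hm]
    simp





/-- The inclusion–exclusion polynomial `Q = ∑_{I ⊆ T} P_{-I}` (over a field of
characteristic two) is not identically zero if and only if `P` contains a monomial with
nonzero coefficient that is divisible by `∏_{i ∈ T} x_i`. -/
theorem sum_subsets_ne_zero_iff_char_two {F : Type*} [Field F] [CharP F 2] {n : ℕ}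
    (P : MvPolynomial (Fin n) F) (T : Finset (Fin n)) :
    (∑ I ∈ T.powerset,
        MvPolynomial.bind₁ (fun i => if i ∈ I then 0 else MvPolynomial.X i) P) ≠ 0 ↔
    ∃ m : Fin n →₀ ℕ, P.coeff m ≠ 0 ∧ ∀ i ∈ T, 0 < m i := by

  have hcoeff : ∀ m : Fin n →₀ ℕ,
      (∑ I ∈ T.powerset,
        MvPolynomial.bind₁ (fun i => if i ∈ I then 0 else MvPolynomial.X i) P).coeff m =
      if ∀ i ∈ T, 0 < m i then P.coeff m else 0 := by
    intro m
    rw [MvPolynomial.coeff_sum, Finset.sum_congr rfl (fun I _ => coeff_bind I P m),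
      ← Finset.sum_filter, Finset.sum_const]
    have hfil : T.powerset.filter (fun I => ∀ i ∈ I, m i = 0)
        = (T.filter (fun i => m i = 0)).powerset := by
      ext I
      rw [Finset.mem_filter, Finset.mem_powerset, Finset.mem_powerset]
      constructor
      · rintro ⟨h1, h2⟩ i hi
        rw [Finset.mem_filter]
        exact ⟨h1 hi, h2 i hi⟩
      · intro h
        exact ⟨fun {i} hi => (Finset.mem_filter.mp (h hi)).1, fun i hi => (Finset.mem_filter.mp (h hi)).2⟩
    rw [hfil, Finset.card_powerset, nsmul_eq_mul]
    push_cast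
    rw [show ((2:F)) = 0 from by exact_mod_cast (CharP.cast_eq_zero F 2)]
    by_cases hZ : (T.filter (fun i => m i = 0)) = ∅
    · rw [hZ]
      have hT : ∀ i ∈ T, 0 < m i := by
        intro i hi
        rcases Nat.eq_zero_or_pos (m i) with h | h
        · exact absurd (Finset.eq_empty_iff_forall_notMem.mp hZ i)
            (by simp [Finset.mem_filter, hi, h])
        · exact h
      rw [if_pos hT]
      simp
    · have hT : ¬ ∀ i ∈ T, 0 < m i := by
        obtain ⟨i, hi⟩ := Finset.nonempty_iff_ne_empty.mpr hZ
        rw [Finset.mem_filter] at hi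
        exact fun h => absurd (h i hi.1) (by omega)
      rw [if_neg hT, zero_pow (Finset.card_ne_zero.mpr (Finset.nonempty_iff_ne_empty.mpr hZ)),
        zero_mul]
  rw [MvPolynomial.ne_zero_iff]
  apply exists_congr
  intro m
  rw [hcoeff]
  split_ifs with h
  · exact ⟨fun h' => ⟨h', h⟩, fun h' => h'.1⟩
  · constructor
    · intro h'; exact absurd rfl h'
    · rintro ⟨_, h2⟩; exact absurd h2 h
end
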